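/- arXiv:2403.04377 — 5 statements merged into one kernel-verified Lean document; each statement's English description precedes it below -/
import Mathlib

section
/- Let M be an invertible 3×3 real matrix with det M > 0, and let u, v ∈ ℝ³ be orthonormal vectors with n = u ×₃ v. Then ‖(M.mulVec u) ×₃ (M.mulVec v)‖ = (det M) · ‖((M⁻¹)ᵀ).mulVec n‖. -/
/-!
Nanson's formula: `M u ×₃ M v = (adj M)ᵀ (u ×₃ v)`, a polynomial identity in the entries, and
`(M⁻¹)ᵀ = (det M)⁻¹ (adj M)ᵀ`. Taking norms and using `det M > 0` gives the area factor.
-/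

open Matrix

/-- The Euclidean norm of a vector in `Fin 3 → ℝ`. -/
noncomputable def euclNorm3 (w : Fin 3 → ℝ) : ℝ := Real.sqrt (∑ i, w i ^ 2)

theorem cross_mulVec_mulVec {R : Type*} [CommRing R] (M : Matrix (Fin 3) (Fin 3) R)
    (u v : Fin 3 → R) :
    (M *ᵥ u) ⨯₃ (M *ᵥ v) = M.adjugateᵀ *ᵥ (u ⨯₃ v) := by
  ext i
  fin_cases i <;>
    simp only [Fin.zero_eta, Fin.mk_one, Fin.reduceFinMk, Fin.isValue, cross_apply, mulVec,
      dotProduct, Fin.sum_univ_three, adjugate_fin_three, transpose_apply, of_apply, cons_val',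
      cons_val_fin_one, cons_val_zero, cons_val_one, cons_val] <;> ring

theorem transpose_inv_eq_inv_det_smul {K : Type*} [Field K] {n : Type*} [Fintype n]
    [DecidableEq n] (M : Matrix n n K) :
    M⁻¹ᵀ = M.det⁻¹ • M.adjugateᵀ := by
  rw [inv_def, transpose_smul, Ring.inverse_eq_inv]

theorem euclNorm3_smul (c : ℝ) (w : Fin 3 → ℝ) :
    euclNorm3 (c • w) = |c| * euclNorm3 w := by
  have sum_sq_smul : ∑ i, (c • w) i ^ 2 = c ^ 2 * ∑ i, w i ^ 2 := by
    simp only [Pi.smul_apply, smul_eq_mul, mul_pow, Finset.mul_sum]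
  rw [euclNorm3, euclNorm3, sum_sq_smul, Real.sqrt_mul (sq_nonneg c), Real.sqrt_sq_eq_abs]

theorem nanson_area_factor_general (M : Matrix (Fin 3) (Fin 3) ℝ) (u v n : Fin 3 → ℝ)
    (hdet : 0 < M.det)
    (hn : n = crossProduct u v) :
    euclNorm3 (crossProduct (M.mulVec u) (M.mulVec v)) =
      M.det * euclNorm3 ((M⁻¹)ᵀ.mulVec n) := by
  rw [hn, cross_mulVec_mulVec, transpose_inv_eq_inv_det_smul, smul_mulVec, euclNorm3_smul,
    abs_of_pos (inv_pos.mpr hdet), ← mul_assoc, mul_inv_cancel₀ hdet.ne', one_mul]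

theorem nanson_area_factor (M : Matrix (Fin 3) (Fin 3) ℝ) (u v n : Fin 3 → ℝ)
    (hM : IsUnit M.det) (hdet : 0 < M.det)
    (hu : euclNorm3 u = 1) (hv : euclNorm3 v = 1) (huv : ∑ i, u i * v i = 0)
    (hn : n = crossProduct u v) :
    euclNorm3 (crossProduct (M.mulVec u) (M.mulVec v)) =
      M.det * euclNorm3 ((M⁻¹)ᵀ.mulVec n) :=
  nanson_area_factor_general M u v n hdet hn
end

section
/- Let X : ℝ³ → ℝ³ be twice continuously differentiable on a neighborhood of p ∈ ℝ³, let F(q) denote the Jacobian matrix of X at q (with entries F(q)ᵢⱼ = ∂ⱼXᵢ(q)), assume det F(p) ≠ 0, and let Ψ : ℝ³ → ℝ³ be differentiable at X(p). Then curl Ψ (X(p)) = (det F(p))⁻¹ • F(p).mulVec ( curl ( q ↦ (F(q))ᵀ.mulVec (Ψ(X(q))) ) (p) ). -/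
open Matrix

/-- Partial derivative in the `i`-th coordinate direction. -/
noncomputable def pd (i : Fin 3) (f : (Fin 3 → ℝ) → ℝ) (x : Fin 3 → ℝ) : ℝ :=
  fderiv ℝ f x (Pi.single i 1)

/-- The curl of a vector field `A : ℝ³ → ℝ³`, componentwise:
`(curl A)₁ = ∂₂A₃ − ∂₃A₂`, `(curl A)₂ = ∂₃A₁ − ∂₁A₃`, `(curl A)₃ = ∂₁A₂ − ∂₂A₁`. -/
noncomputable def curl (A : (Fin 3 → ℝ) → (Fin 3 → ℝ)) (x : Fin 3 → ℝ) : Fin 3 → ℝ :=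
  ![pd 1 (fun y => A y 2) x - pd 2 (fun y => A y 1) x,
    pd 2 (fun y => A y 0) x - pd 0 (fun y => A y 2) x,
    pd 0 (fun y => A y 1) x - pd 1 (fun y => A y 0) x]

/-- The Jacobian matrix of a map `X : ℝ³ → ℝ³` at a point, with entries `∂ⱼ Xᵢ`. -/
noncomputable def jacobian (X : (Fin 3 → ℝ) → (Fin 3 → ℝ)) (q : Fin 3 → ℝ) :
    Matrix (Fin 3) (Fin 3) ℝ :=
  Matrix.of fun i j => pd j (fun y => X y i) q

lemma fderiv_pi_apply' {f : (Fin 3 → ℝ) → (Fin 3 → ℝ)} {q : Fin 3 → ℝ}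
    (hf : DifferentiableAt ℝ f q) (i : Fin 3) (v : Fin 3 → ℝ) :
    fderiv ℝ (fun y => f y i) q v = fderiv ℝ f q v i := by
  have h : (fun y => f y i)
      = (ContinuousLinearMap.proj (R := ℝ) (φ := fun _ : Fin 3 => ℝ) i) ∘ f := rfl
  rw [h, fderiv_comp q (ContinuousLinearMap.proj i).differentiableAt hf]
  simp

lemma clm_pi_repr (L : (Fin 3 → ℝ) →L[ℝ] (Fin 3 → ℝ)) (v : Fin 3 → ℝ) (i : Fin 3) :
    L v i = ∑ l, v l * L (Pi.single l 1) i := by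
  have hv : v = v 0 • (Pi.single 0 1 : Fin 3 → ℝ) + v 1 • (Pi.single 1 1 : Fin 3 → ℝ)
      + v 2 • (Pi.single 2 1 : Fin 3 → ℝ) := by
    ext m; fin_cases m <;> simp
  conv_lhs => rw [hv]
  simp [Fin.sum_univ_three, mul_comm]

theorem curl_pullback (X : (Fin 3 → ℝ) → (Fin 3 → ℝ)) (p : Fin 3 → ℝ)
    (Ψ : (Fin 3 → ℝ) → (Fin 3 → ℝ))
    (hX : ContDiffAt ℝ 2 X p)
    (hF : (jacobian X p).det ≠ 0)
    (hΨ : DifferentiableAt ℝ Ψ (X p)) :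
    curl Ψ (X p) =
      ((jacobian X p).det)⁻¹ •
        (jacobian X p).mulVec
          (curl (fun q => (jacobian X q)ᵀ.mulVec (Ψ (X q))) p) := by
  have hXd : DifferentiableAt ℝ X p := hX.differentiableAt two_ne_zero
  have hfdX : ContDiffAt ℝ 1 (fderiv ℝ X) p := hX.fderiv_right (m := 1) (by norm_num)
  have hfdXd : DifferentiableAt ℝ (fderiv ℝ X) p := hfdX.differentiableAt one_ne_zero
  have hev : ∀ᶠ q in nhds p, DifferentiableAt ℝ X q := by
    filter_upwards [hX.eventually (by norm_num)] with q hq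
    exact hq.differentiableAt two_ne_zero
  have hsymm : IsSymmSndFDerivAt ℝ X p := hX.isSymmSndFDerivAt (by norm_num)
  -- entries of the Jacobian at p
  have hFm : ∀ i j, jacobian X p i j = fderiv ℝ X p (Pi.single j 1) i := by
    intro i j
    simp only [jacobian, Matrix.of_apply, pd]
    exact fderiv_pi_apply' hXd i _
  have hG : ∀ i j, pd j (fun y => Ψ y i) (X p) = fderiv ℝ Ψ (X p) (Pi.single j 1) i :=
    fun i j => fderiv_pi_apply' hΨ i _
  -- entry functions q ↦ fderiv X q (e_j) i : differentiable, with symmetric derivative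
  have hAv : ∀ j, DifferentiableAt ℝ (fun q => fderiv ℝ X q (Pi.single j 1)) p :=
    fun j => hfdXd.clm_apply (differentiableAt_const _)
  have hA : ∀ i j, DifferentiableAt ℝ (fun q => fderiv ℝ X q (Pi.single j 1) i) p :=
    fun i j => (ContinuousLinearMap.proj (R := ℝ) (φ := fun _ : Fin 3 => ℝ) i).differentiableAt.comp p (hAv j)
  have hD2 : ∀ i j k, fderiv ℝ (fun q => fderiv ℝ X q (Pi.single j 1) i) p (Pi.single k 1)
      = fderiv ℝ (fderiv ℝ X) p (Pi.single k 1) (Pi.single j 1) i := by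
    intro i j k
    rw [fderiv_pi_apply' (hAv j) i]
    rw [fderiv_clm_apply hfdXd (differentiableAt_const _)]
    simp
  -- chain rule
  have hΨX : DifferentiableAt ℝ (fun q => Ψ (X q)) p := hΨ.comp p hXd
  have hΨXi : ∀ i, DifferentiableAt ℝ (fun q => Ψ (X q) i) p :=
    fun i => (ContinuousLinearMap.proj (R := ℝ) (φ := fun _ : Fin 3 => ℝ) i).differentiableAt.comp p hΨX
  have hchain : ∀ i k, fderiv ℝ (fun q => Ψ (X q) i) p (Pi.single k 1)
      = ∑ l, fderiv ℝ Ψ (X p) (Pi.single l 1) i * fderiv ℝ X p (Pi.single k 1) l := by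
    intro i k
    rw [fderiv_pi_apply' hΨX i]
    rw [show fderiv ℝ (fun q => Ψ (X q)) p = (fderiv ℝ Ψ (X p)).comp (fderiv ℝ X p) from
      fderiv_comp p hΨ hXd]
    simp only [ContinuousLinearMap.comp_apply]
    rw [clm_pi_repr]
    exact Finset.sum_congr rfl (fun l _ => mul_comm _ _)
  -- derivative of components of B = Fᵀ (Ψ ∘ X)
  have hB : ∀ j k, pd k (fun y => ((jacobian X y)ᵀ.mulVec (Ψ (X y))) j) p
      = ∑ i, (fderiv ℝ (fderiv ℝ X) p (Pi.single k 1) (Pi.single j 1) i * Ψ (X p) i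
          + fderiv ℝ X p (Pi.single j 1) i * fderiv ℝ (fun q => Ψ (X q) i) p (Pi.single k 1)) := by
    intro j k
    have hev2 : (fun y => ((jacobian X y)ᵀ.mulVec (Ψ (X y))) j)
        =ᶠ[nhds p] (fun q => ∑ i, fderiv ℝ X q (Pi.single j 1) i * Ψ (X q) i) := by
      filter_upwards [hev] with q hq
      simp only [Matrix.mulVec, dotProduct, Matrix.transpose_apply, jacobian, Matrix.of_apply, pd]
      exact Finset.sum_congr rfl (fun i _ => by rw [fderiv_pi_apply' hq])
    unfold pd
    rw [hev2.fderiv_eq]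
    rw [fderiv_fun_sum (A := fun i y => fderiv ℝ X y (Pi.single j 1) i * Ψ (X y) i) (fun i _ => ((hA i j).mul (hΨXi i)))]
    simp only [ContinuousLinearMap.sum_apply]
    refine Finset.sum_congr rfl (fun i _ => ?_)
    rw [fderiv_fun_mul (hA i j) (hΨXi i)]
    simp only [ContinuousLinearMap.add_apply, ContinuousLinearMap.smul_apply, smul_eq_mul]
    rw [hD2 i j k]
    ring
  -- curl of B
  have hcurlB : ∀ j k, pd k (fun y => ((jacobian X y)ᵀ.mulVec (Ψ (X y))) j) p
        - pd j (fun y => ((jacobian X y)ᵀ.mulVec (Ψ (X y))) k) p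
      = ∑ i, (fderiv ℝ X p (Pi.single j 1) i
            * (∑ l, fderiv ℝ Ψ (X p) (Pi.single l 1) i * fderiv ℝ X p (Pi.single k 1) l)
          - fderiv ℝ X p (Pi.single k 1) i
            * (∑ l, fderiv ℝ Ψ (X p) (Pi.single l 1) i * fderiv ℝ X p (Pi.single j 1) l)) := by
    intro j k
    rw [hB j k, hB k j, ← Finset.sum_sub_distrib]
    refine Finset.sum_congr rfl (fun i _ => ?_)
    rw [show fderiv ℝ (fderiv ℝ X) p (Pi.single k 1) (Pi.single j 1)
        = fderiv ℝ (fderiv ℝ X) p (Pi.single j 1) (Pi.single k 1) from hsymm.eq _ _]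
    rw [hchain i k, hchain i j]
    ring
  -- assemble
  have hc : curl (fun q => (jacobian X q)ᵀ.mulVec (Ψ (X q))) p
      = ![∑ i, (fderiv ℝ X p (Pi.single 2 1) i
            * (∑ l, fderiv ℝ Ψ (X p) (Pi.single l 1) i * fderiv ℝ X p (Pi.single 1 1) l)
          - fderiv ℝ X p (Pi.single 1 1) i
            * (∑ l, fderiv ℝ Ψ (X p) (Pi.single l 1) i * fderiv ℝ X p (Pi.single 2 1) l)),
         ∑ i, (fderiv ℝ X p (Pi.single 0 1) i
            * (∑ l, fderiv ℝ Ψ (X p) (Pi.single l 1) i * fderiv ℝ X p (Pi.single 2 1) l)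
          - fderiv ℝ X p (Pi.single 2 1) i
            * (∑ l, fderiv ℝ Ψ (X p) (Pi.single l 1) i * fderiv ℝ X p (Pi.single 0 1) l)),
         ∑ i, (fderiv ℝ X p (Pi.single 1 1) i
            * (∑ l, fderiv ℝ Ψ (X p) (Pi.single l 1) i * fderiv ℝ X p (Pi.single 0 1) l)
          - fderiv ℝ X p (Pi.single 0 1) i
            * (∑ l, fderiv ℝ Ψ (X p) (Pi.single l 1) i * fderiv ℝ X p (Pi.single 1 1) l))] := by
    unfold curl
    rw [hcurlB 2 1, hcurlB 0 2, hcurlB 1 0]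
  have hcΨ : curl Ψ (X p)
      = ![fderiv ℝ Ψ (X p) (Pi.single 1 1) 2 - fderiv ℝ Ψ (X p) (Pi.single 2 1) 1,
          fderiv ℝ Ψ (X p) (Pi.single 2 1) 0 - fderiv ℝ Ψ (X p) (Pi.single 0 1) 2,
          fderiv ℝ Ψ (X p) (Pi.single 0 1) 1 - fderiv ℝ Ψ (X p) (Pi.single 1 1) 0] := by
    unfold curl
    rw [hG 2 1, hG 1 2, hG 0 2, hG 2 0, hG 1 0, hG 0 1]
  rw [eq_comm, inv_smul_eq_iff₀ hF, hc, hcΨ]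
  funext a
  fin_cases a <;>
  · simp only [Matrix.mulVec, dotProduct, Pi.smul_apply, smul_eq_mul, Fin.sum_univ_three,
      Matrix.det_fin_three, Matrix.cons_val_zero, Matrix.cons_val_one, Matrix.head_cons,
      Matrix.cons_val_two, Matrix.tail_cons, Fin.isValue, Fin.zero_eta, Fin.mk_one, Fin.reduceFinMk, hFm]
    ring
end

section
/- Let X : ℝ³ → ℝ³ be twice continuously differentiable on a neighborhood of p ∈ ℝ³, let F(q) denote the Jacobian matrix of X at q (with entries F(q)ᵢⱼ = ∂ⱼXᵢ(q)), assume det F(p) ≠ 0, and let Ψ : ℝ³ → ℝ³ be differentiable at X(p). Then for every n ∈ ℝ³, (curl Ψ)(X(p)) ⬝ ( det F(p) • ((F(p))⁻¹)ᵀ.mulVec n ) = ( curl ( q ↦ (F(q))ᵀ.mulVec (Ψ(X(q))) ) (p) ) ⬝ n. -/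
open Matrix Topology Filter

lemma clm_apply_eq (T : (Fin 3 → ℝ) →L[ℝ] (Fin 3 → ℝ)) (w : Fin 3 → ℝ) (i : Fin 3) :
    T w i = ∑ l, w l * T (Pi.single l 1) i := by
  have h := LinearMap.pi_apply_eq_sum_univ (T : (Fin 3 → ℝ) →ₗ[ℝ] (Fin 3 → ℝ)) w
  have hs : ∀ l : Fin 3, (fun j => if l = j then (1:ℝ) else 0) = Pi.single l 1 := by
    intro l; funext j; simp [Pi.single_apply, eq_comm]
  simp only [hs, ContinuousLinearMap.coe_coe] at h
  rw [h]
  simp [Finset.sum_apply]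


theorem curl_flux_pullback (X : (Fin 3 → ℝ) → (Fin 3 → ℝ)) (p : Fin 3 → ℝ)
    (Ψ : (Fin 3 → ℝ) → (Fin 3 → ℝ))
    (hX : ContDiffAt ℝ 2 X p)
    (hF : (jacobian X p).det ≠ 0)
    (hΨ : DifferentiableAt ℝ Ψ (X p)) :
    ∀ n : Fin 3 → ℝ,
      curl Ψ (X p) ⬝ᵥ ((jacobian X p).det • ((jacobian X p)⁻¹)ᵀ.mulVec n) =
        curl (fun q => (jacobian X q)ᵀ.mulVec (Ψ (X q))) p ⬝ᵥ n := by
  intro n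
  classical
  have hXp : DifferentiableAt ℝ X p := hX.differentiableAt two_ne_zero
  have hXdiff : ∀ᶠ q in 𝓝 p, DifferentiableAt ℝ X q := by
    filter_upwards [hX.eventually (by norm_num)] with q hq
    exact hq.differentiableAt two_ne_zero
  set Φ : (Fin 3 → ℝ) → (Fin 3 → ℝ) →L[ℝ] (Fin 3 → ℝ) := fderiv ℝ X with hΦdef
  have hΦ : DifferentiableAt ℝ Φ p :=
    (hX.fderiv_right (m := 1) (by norm_num)).differentiableAt one_ne_zero
  set Φ' := fderiv ℝ Φ p with hΦ'def
  have hsymm : ∀ v w, Φ' v w = Φ' w v := hX.isSymmSndFDerivAt (by simp)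
  set G := fderiv ℝ Ψ (X p) with hGdef
  -- partial derivatives of components of X in terms of Φ
  have hpdX : ∀ᶠ q in 𝓝 p, ∀ i j : Fin 3, pd j (fun y => X y i) q = Φ q (Pi.single j 1) i := by
    filter_upwards [hXdiff] with q hq i j
    have h1 : HasFDerivAt (fun y => X y i)
        ((ContinuousLinearMap.proj i : (Fin 3 → ℝ) →L[ℝ] ℝ).comp (fderiv ℝ X q)) q :=
      (ContinuousLinearMap.proj i : (Fin 3 → ℝ) →L[ℝ] ℝ).hasFDerivAt.comp q hq.hasFDerivAt
    simp [pd, h1.fderiv, hΦdef]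
  have hFmat : ∀ i j : Fin 3, jacobian X p i j = Φ p (Pi.single j 1) i := by
    intro i j
    have := hpdX.self_of_nhds i j
    simpa [jacobian] using this
  -- derivative of q ↦ Φ q (e j) i
  have hU : ∀ i j : Fin 3, HasFDerivAt (fun q => Φ q (Pi.single j 1) i)
      (((ContinuousLinearMap.proj i : (Fin 3 → ℝ) →L[ℝ] ℝ).comp
        (ContinuousLinearMap.apply ℝ (Fin 3 → ℝ) (Pi.single j 1))).comp Φ') p := by
    intro i j
    exact ((ContinuousLinearMap.proj i : (Fin 3 → ℝ) →L[ℝ] ℝ).comp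
      (ContinuousLinearMap.apply ℝ (Fin 3 → ℝ) (Pi.single j 1))).hasFDerivAt.comp p
      hΦ.hasFDerivAt
  -- derivative of q ↦ Ψ (X q) i
  have hV : ∀ i : Fin 3, HasFDerivAt (fun q => Ψ (X q) i)
      ((ContinuousLinearMap.proj i : (Fin 3 → ℝ) →L[ℝ] ℝ).comp (G.comp (Φ p))) p := by
    intro i
    have h0 : HasFDerivAt (fun q => Ψ (X q)) (G.comp (Φ p)) p :=
      hΨ.hasFDerivAt.comp p hXp.hasFDerivAt
    exact (ContinuousLinearMap.proj i : (Fin 3 → ℝ) →L[ℝ] ℝ).hasFDerivAt.comp p h0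
  -- the main computation of the partial derivatives of the pulled back field
  have hA : ∀ j k : Fin 3,
      pd k (fun q => (jacobian X q)ᵀ.mulVec (Ψ (X q)) j) p
        = ∑ i : Fin 3, (Ψ (X p) i * Φ' (Pi.single k 1) (Pi.single j 1) i
            + Φ p (Pi.single j 1) i * G (Φ p (Pi.single k 1)) i) := by
    intro j k
    have heq : (fun q => (jacobian X q)ᵀ.mulVec (Ψ (X q)) j)
        =ᶠ[𝓝 p] fun q => ∑ i : Fin 3, Φ q (Pi.single j 1) i * Ψ (X q) i := by
      filter_upwards [hpdX] with q hq
      simp [jacobian, Matrix.mulVec, dotProduct, hq, Matrix.transpose_apply]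
    have hder : HasFDerivAt (fun q => ∑ i : Fin 3, Φ q (Pi.single j 1) i * Ψ (X q) i)
        (∑ i : Fin 3,
          ((Φ p (Pi.single j 1) i) •
              ((ContinuousLinearMap.proj i : (Fin 3 → ℝ) →L[ℝ] ℝ).comp (G.comp (Φ p)))
            + (Ψ (X p) i) •
              (((ContinuousLinearMap.proj i : (Fin 3 → ℝ) →L[ℝ] ℝ).comp
                (ContinuousLinearMap.apply ℝ (Fin 3 → ℝ) (Pi.single j 1))).comp Φ'))) p := by
      apply HasFDerivAt.fun_sum
      intro i _
      exact (hU i j).mul (hV i)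
    rw [pd, heq.fderiv_eq, hder.fderiv]
    simp only [ContinuousLinearMap.sum_apply, ContinuousLinearMap.add_apply,
      ContinuousLinearMap.coe_smul', Pi.smul_apply, ContinuousLinearMap.coe_comp',
      Function.comp_apply, ContinuousLinearMap.proj_apply,
      ContinuousLinearMap.apply_apply, smul_eq_mul]
    exact Finset.sum_congr rfl fun i _ => by ring
  -- entries of G as a matrix
  have hg : ∀ c l : Fin 3, pd l (fun y => Ψ y c) (X p) = G (Pi.single l 1) c := by
    intro c l
    have h1 : HasFDerivAt (fun y => Ψ y c)
        ((ContinuousLinearMap.proj c : (Fin 3 → ℝ) →L[ℝ] ℝ).comp G) (X p) :=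
      (ContinuousLinearMap.proj c : (Fin 3 → ℝ) →L[ℝ] ℝ).hasFDerivAt.comp (X p) hΨ.hasFDerivAt
    simp [pd, h1.fderiv]
  -- replace det • inv transpose by adjugate transpose
  have hadj : (jacobian X p).det • ((jacobian X p)⁻¹)ᵀ.mulVec n
      = ((jacobian X p).adjugate)ᵀ.mulVec n := by
    rw [← Matrix.smul_mulVec, ← Matrix.transpose_smul, Matrix.inv_def, smul_smul,
      Ring.mul_inverse_cancel _ (isUnit_iff_ne_zero.mpr hF), one_smul]
  rw [hadj]
  -- expand the curl on the right using hA and symmetry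
  have hGexp : ∀ (k i : Fin 3), G (Φ p (Pi.single k 1)) i
      = ∑ l : Fin 3, Φ p (Pi.single k 1) l * G (Pi.single l 1) i := by
    intro k i
    exact clm_apply_eq G (Φ p (Pi.single k 1)) i
  -- abbreviations for entries
  set f : Fin 3 → Fin 3 → ℝ := fun i j => Φ p (Pi.single j 1) i with hfdef
  set g : Fin 3 → Fin 3 → ℝ := fun i l => G (Pi.single l 1) i with hgdef
  have hAkj : ∀ j k : Fin 3,
      pd k (fun q => (jacobian X q)ᵀ.mulVec (Ψ (X q)) j) p
        - pd j (fun q => (jacobian X q)ᵀ.mulVec (Ψ (X q)) k) p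
      = ∑ i : Fin 3, ∑ l : Fin 3, (f i j * g i l * f l k - f i k * g i l * f l j) := by
    intro j k
    rw [hA j k, hA k j]
    simp only [hGexp, Fin.sum_univ_three]
    rw [hsymm (Pi.single k 1) (Pi.single j 1)]
    ring
  -- now everything is concrete linear algebra
  have hcurlΨ : curl Ψ (X p) = ![g 2 1 - g 1 2, g 0 2 - g 2 0, g 1 0 - g 0 1] := by
    simp [curl, hg, hgdef]
  have hcurlA : curl (fun q => (jacobian X q)ᵀ.mulVec (Ψ (X q))) p
      = ![∑ i : Fin 3, ∑ l : Fin 3, (f i 2 * g i l * f l 1 - f i 1 * g i l * f l 2),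
          ∑ i : Fin 3, ∑ l : Fin 3, (f i 0 * g i l * f l 2 - f i 2 * g i l * f l 0),
          ∑ i : Fin 3, ∑ l : Fin 3, (f i 1 * g i l * f l 0 - f i 0 * g i l * f l 1)] := by
    funext m
    fin_cases m <;>
      simp only [curl, Matrix.cons_val_zero, Matrix.cons_val_one, Matrix.head_cons,
        Matrix.cons_val_two, Matrix.tail_cons] <;>
      [exact hAkj 2 1; exact hAkj 0 2; exact hAkj 1 0]
  have hFf : jacobian X p = Matrix.of f := by
    ext i j; exact hFmat i j
  rw [hcurlΨ, hcurlA, hFf]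
  simp only [dotProduct, Matrix.mulVec, Matrix.adjugate_fin_three, Fin.sum_univ_three,
    Matrix.transpose_apply, Matrix.of_apply, Matrix.cons_val', Matrix.cons_val_zero,
    Matrix.cons_val_one, Matrix.head_cons, Matrix.empty_val', Matrix.cons_val_fin_one,
    Matrix.head_fin_const, Matrix.cons_val_two, Matrix.tail_cons]
  ring
end

section
/- Let h : ℝ² → ℝ be differentiable at (r₀, z₀) with r₀ > 0, define H : {x ∈ ℝ³ : r(x) > 0} → ℝ³ by H(x) = h(r(x), x₃) • e_θ(x), and let n = n_r • e_r(x) + n_z • e₃ with n_r, n_z ∈ ℝ, at a point x with r(x) = r₀ and x₃ = z₀. Then curl H(x) ⬝ n = (1/r₀) · [ ( h(r₀,z₀) + r₀ (∂₁h)(r₀,z₀) ) n_z − r₀ (∂₂h)(r₀,z₀) n_r ], i.e. curl H(x) ⬝ n equals (1/r₀) times the derivative of the function (ρ, ζ) ↦ ρ h(ρ, ζ) in the direction τ = (n_z, −n_r), evaluated at (r₀, z₀). -/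
set_option maxHeartbeats 1000000


open Matrix

/-- The cylindrical radius `r(x) = √(x₁² + x₂²)`. -/
noncomputable def rcyl (x : Fin 3 → ℝ) : ℝ := Real.sqrt (x 0 ^ 2 + x 1 ^ 2)

/-- The radial unit vector `e_r(x)`. -/
noncomputable def er (x : Fin 3 → ℝ) : Fin 3 → ℝ := ![x 0 / rcyl x, x 1 / rcyl x, 0]

/-- The azimuthal unit vector `e_θ(x)`. -/
noncomputable def eθ (x : Fin 3 → ℝ) : Fin 3 → ℝ := ![-(x 1) / rcyl x, x 0 / rcyl x, 0]

/-- The axial unit vector `e₃`. -/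
noncomputable def e3 : Fin 3 → ℝ := ![0, 0, 1]

/-- coordinate projection as a continuous linear map -/
noncomputable def Pj (i : Fin 3) : (Fin 3 → ℝ) →L[ℝ] ℝ := ContinuousLinearMap.proj i

theorem curl_azimuthal_flux (h : ℝ × ℝ → ℝ) (r₀ z₀ : ℝ) (hr : 0 < r₀)
    (hh : DifferentiableAt ℝ h (r₀, z₀)) (x : Fin 3 → ℝ)
    (hx : rcyl x = r₀) (hx3 : x 2 = z₀) (nr nz : ℝ) (n : Fin 3 → ℝ)
    (hn : n = nr • er x + nz • e3) :
    curl (fun y => h (rcyl y, y 2) • eθ y) x ⬝ᵥ n =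
        (1 / r₀) * ((h (r₀, z₀) + r₀ * fderiv ℝ h (r₀, z₀) (1, 0)) * nz
          - r₀ * fderiv ℝ h (r₀, z₀) (0, 1) * nr) ∧
      curl (fun y => h (rcyl y, y 2) • eθ y) x ⬝ᵥ n =
        (1 / r₀) * fderiv ℝ (fun q : ℝ × ℝ => q.1 * h q) (r₀, z₀) (nz, -nr) := by
  have hx' : Real.sqrt (x 0 ^ 2 + x 1 ^ 2) = r₀ := hx
  have habs : x 0 ^ 2 + x 1 ^ 2 = r₀ ^ 2 := by
    nlinarith [Real.sq_sqrt (show (0:ℝ) ≤ x 0 ^ 2 + x 1 ^ 2 by positivity)]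
  have hab_ne : x 0 ^ 2 + x 1 ^ 2 ≠ 0 := by rw [habs]; positivity
  have hrne : rcyl x ≠ 0 := by rw [hx]; exact ne_of_gt hr
  have hr0 : r₀ ≠ 0 := ne_of_gt hr
  set L := fderiv ℝ h (r₀, z₀) with hL
  set l1 := L (1, 0) with hl1
  set l2 := L (0, 1) with hl2
  set h₀ := h (r₀, z₀) with hh₀
  have Lpair : ∀ c d : ℝ, L (c, d) = c * l1 + d * l2 := by
    intro c d
    have e : (c, d) = c • ((1:ℝ), (0:ℝ)) + d • ((0:ℝ), (1:ℝ)) := by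
      simp [Prod.ext_iff]
    rw [e, map_add, ContinuousLinearMap.map_smul, ContinuousLinearMap.map_smul]
    simp [smul_eq_mul]
    rfl
  have hp0 : HasFDerivAt (fun y : Fin 3 → ℝ => y 0) (Pj 0) x := (Pj 0).hasFDerivAt
  have hp1 : HasFDerivAt (fun y : Fin 3 → ℝ => y 1) (Pj 1) x := (Pj 1).hasFDerivAt
  have hp2 : HasFDerivAt (fun y : Fin 3 → ℝ => y 2) (Pj 2) x := (Pj 2).hasFDerivAt
  set Dr : (Fin 3 → ℝ) →L[ℝ] ℝ :=
    (1 / (2 * r₀)) • ((x 0 • Pj 0 + x 0 • Pj 0) + (x 1 • Pj 1 + x 1 • Pj 1)) with hDr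
  have hrc : HasFDerivAt rcyl Dr x := by
    have hsq : HasFDerivAt (fun y : Fin 3 → ℝ => y 0 ^ 2 + y 1 ^ 2)
        ((x 0 • Pj 0 + x 0 • Pj 0) + (x 1 • Pj 1 + x 1 • Pj 1)) x := by
      simpa [pow_two] using (show HasFDerivAt (fun y : Fin 3 → ℝ => y 0 * y 0 + y 1 * y 1) _ x
        from (hp0.mul hp0).add (hp1.mul hp1))
    have := hsq.sqrt hab_ne
    rw [hx'] at this
    exact this
  have hF : HasFDerivAt (fun y => h (rcyl y, y 2)) (L.comp (Dr.prod (Pj 2))) x := by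
    have hφ : HasFDerivAt (fun y : Fin 3 → ℝ => (rcyl y, y 2)) (Dr.prod (Pj 2)) x :=
      HasFDerivAt.prodMk hrc hp2
    have hhx : HasFDerivAt h L (rcyl x, x 2) := by rw [hx, hx3]; exact hh.hasFDerivAt
    exact hhx.comp x hφ
  have hinv : HasFDerivAt (fun y => (rcyl y)⁻¹) ((-(r₀ ^ 2)⁻¹) • Dr) x := by
    have := (hasDerivAt_inv hrne).comp_hasFDerivAt x hrc
    rwa [hx] at this
  have hH1 : HasFDerivAt (fun y => h (rcyl y, y 2) * (y 0 * (rcyl y)⁻¹)) _ x :=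
    hF.mul (hp0.mul hinv)
  have hH0 : HasFDerivAt (fun y => h (rcyl y, y 2) * (-y 1 * (rcyl y)⁻¹)) _ x :=
    hF.mul ((hp1.neg).mul hinv)
  -- rewrite component functions
  have e0 : (fun y => (h (rcyl y, y 2) • eθ y) 0)
      = fun y => h (rcyl y, y 2) * (-y 1 * (rcyl y)⁻¹) := by
    funext y; simp [eθ, div_eq_mul_inv]
  have e1 : (fun y => (h (rcyl y, y 2) • eθ y) 1)
      = fun y => h (rcyl y, y 2) * (y 0 * (rcyl y)⁻¹) := by
    funext y; simp [eθ, div_eq_mul_inv]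
  have e2 : (fun y => (h (rcyl y, y 2) • eθ y) 2) = fun _ => (0:ℝ) := by
    funext y; simp [eθ]
  -- the six partial derivatives
  have pd12 : pd 1 (fun y => (h (rcyl y, y 2) • eθ y) 2) x = 0 := by
    rw [pd, e2]; simp
  have pd02 : pd 0 (fun y => (h (rcyl y, y 2) • eθ y) 2) x = 0 := by
    rw [pd, e2]; simp
  have pd21 : pd 2 (fun y => (h (rcyl y, y 2) • eθ y) 1) x = x 0 * l2 / r₀ := by
    rw [pd, e1, hH1.fderiv]
    simp [hDr, Pj, Pi.single_apply, hx, hx3, Lpair]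
    ring
  have pd20 : pd 2 (fun y => (h (rcyl y, y 2) • eθ y) 0) x = -(x 1 * l2 / r₀) := by
    rw [pd, e0, hH0.fderiv]
    simp [hDr, Pj, Pi.single_apply, hx, hx3, Lpair]
    ring
  have pd01 : pd 0 (fun y => (h (rcyl y, y 2) • eθ y) 1) x
      = l1 * x 0 ^ 2 / r₀ ^ 2 + h₀ / r₀ - h₀ * x 0 ^ 2 / r₀ ^ 3 := by
    rw [pd, e1, hH1.fderiv]
    simp [hDr, Pj, Pi.single_apply, hx, hx3, Lpair]
    field_simp
    ring
  have pd10 : pd 1 (fun y => (h (rcyl y, y 2) • eθ y) 0) x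
      = h₀ * x 1 ^ 2 / r₀ ^ 3 - h₀ / r₀ - l1 * x 1 ^ 2 / r₀ ^ 2 := by
    rw [pd, e0, hH0.fderiv]
    simp [hDr, Pj, Pi.single_apply, hx, hx3, Lpair]
    field_simp
    ring
  -- the dot product
  have hdot : curl (fun y => h (rcyl y, y 2) • eθ y) x ⬝ᵥ n =
      (1 / r₀) * ((h₀ + r₀ * l1) * nz - r₀ * l2 * nr) := by
    simp only [curl, dotProduct, Fin.sum_univ_three, Matrix.cons_val_zero,
      Matrix.cons_val_one, Matrix.head_cons, Matrix.cons_val_two, Matrix.tail_cons,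
      pd12, pd02, pd21, pd20, pd01, pd10, hn]
    simp [er, e3, hx]
    ring_nf
    rw [show x 1 ^ 2 = r₀ ^ 2 - x 0 ^ 2 from by linarith]
    field_simp
    ring
  refine ⟨hdot, ?_⟩
  rw [hdot]
  -- second form
  have hmul : HasFDerivAt (fun q : ℝ × ℝ => q.1 * h q)
      (r₀ • L + h₀ • ContinuousLinearMap.fst ℝ ℝ ℝ) (r₀, z₀) := by
    have : HasFDerivAt (fun q : ℝ × ℝ => q.1 * h q) _ (r₀, z₀) :=
      (hasFDerivAt_fst (p := ((r₀, z₀) : ℝ × ℝ))).mul hh.hasFDerivAt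
    simpa using this
  rw [hmul.fderiv]
  simp [Lpair]
  left; ring
end

section
/- Let û : ℝ² → ℝ² be differentiable at p̂ = (r_m, z_m) with r_m > 0, and let H̃, G̃ : ℝ² → ℝ be differentiable at p̂. Define ℋ(x) = ( H̃(r(x), x₃) / r(x) ) • e_θ(x) and 𝒢(x) = ( G̃(r(x), x₃) / r(x) ) • e_θ(x) on {x ∈ ℝ³ : r(x) > 0}. Then, at the point p = (r_m, 0, z_m), ( F̂(p̂).mulVec (curl ℋ(p)) ) ⬝ ( F̂(p̂).mulVec (curl 𝒢(p)) ) = (1/r_m²) · ( N(p̂).mulVec (∇H̃(p̂)) ) ⬝ ( N(p̂).mulVec (∇G̃(p̂)) ), where ∇H̃ = (∂₁H̃, ∂₂H̃) and ⬝ is the Euclidean dot product. -/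
open Matrix

/-- Partial derivative of a planar scalar field w.r.t. the first (radial) variable. -/
noncomputable def pdr (f : ℝ × ℝ → ℝ) (q : ℝ × ℝ) : ℝ := fderiv ℝ f q (1, 0)

/-- Partial derivative of a planar scalar field w.r.t. the second (axial) variable. -/
noncomputable def pdz (f : ℝ × ℝ → ℝ) (q : ℝ × ℝ) : ℝ := fderiv ℝ f q (0, 1)

/-- The planar gradient `(∂₁f, ∂₂f)` of a planar scalar field. -/
noncomputable def grad2 (f : ℝ × ℝ → ℝ) (q : ℝ × ℝ) : Fin 2 → ℝ := ![pdr f q, pdz f q]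

/-- The axisymmetric deformation gradient `F̂(p̂)` (rows/columns indexed by `(r, θ, z)`)
associated with a displacement `û = (û_r, û_z)` at `p̂ = (r_m, z_m)`. -/
noncomputable def Fhat (u : ℝ × ℝ → ℝ × ℝ) (q : ℝ × ℝ) : Matrix (Fin 3) (Fin 3) ℝ :=
  !![1 + pdr (fun s => (u s).1) q, 0, pdz (fun s => (u s).1) q;
     0, 1 + (u q).1 / q.1, 0;
     pdr (fun s => (u s).2) q, 0, 1 + pdz (fun s => (u s).2) q]

/-- The tensor `N(p̂)` of the axisymmetric Lagrangian weak formulation. -/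
noncomputable def Nhat (u : ℝ × ℝ → ℝ × ℝ) (q : ℝ × ℝ) : Matrix (Fin 2) (Fin 2) ℝ :=
  !![pdz (fun s => (u s).1) q, -(1 + pdr (fun s => (u s).1) q);
     1 + pdz (fun s => (u s).2) q, -(pdr (fun s => (u s).2) q)]

open ContinuousLinearMap in
lemma curl_azi (H : ℝ × ℝ → ℝ) (rm zm : ℝ) (hr : 0 < rm)
    (hH : DifferentiableAt ℝ H (rm, zm)) :
    curl (fun y => (H (rcyl y, y 2) / rcyl y) • eθ y) ![rm, 0, zm] =
      ![-(pdz H (rm, zm)) / rm, 0, pdr H (rm, zm) / rm] := by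
  have hrne : rm ≠ 0 := ne_of_gt hr
  have hproj : ∀ i : Fin 3, HasFDerivAt (fun y : Fin 3 → ℝ => y i)
      (proj i : (Fin 3 → ℝ) →L[ℝ] ℝ) ![rm, 0, zm] :=
    fun i => (proj i : (Fin 3 → ℝ) →L[ℝ] ℝ).hasFDerivAt
  have hsum : (![rm, 0, zm] : Fin 3 → ℝ) 0 * (![rm, 0, zm] : Fin 3 → ℝ) 0
      + (![rm, 0, zm] : Fin 3 → ℝ) 1 * (![rm, 0, zm] : Fin 3 → ℝ) 1 = rm ^ 2 := by
    show rm * rm + 0 * 0 = rm ^ 2; ring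
  have hsq : Real.sqrt ((![rm, 0, zm] : Fin 3 → ℝ) 0 * (![rm, 0, zm] : Fin 3 → ℝ) 0
      + (![rm, 0, zm] : Fin 3 → ℝ) 1 * (![rm, 0, zm] : Fin 3 → ℝ) 1) = rm := by
    rw [hsum]; exact Real.sqrt_sq hr.le
  have hsq' : Real.sqrt (rm * rm + 0 * 0) = rm := hsq
  have hsq'' : Real.sqrt (rm * rm) = rm := by
    rw [show rm * rm = rm ^ 2 by ring]; exact Real.sqrt_sq hr.le
  -- derivative of the squared radius
  have hq : HasFDerivAt (fun y : Fin 3 → ℝ => y 0 * y 0 + y 1 * y 1)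
      ((2 * rm) • (proj 0 : (Fin 3 → ℝ) →L[ℝ] ℝ)) ![rm, 0, zm] := by
    have h := ((hproj 0).fun_mul (hproj 0)).fun_add ((hproj 1).fun_mul (hproj 1))
    refine h.congr_fderiv (Eq.symm ?_)
    refine ContinuousLinearMap.ext fun v => ?_
    show (2 * rm) * v 0 = _
    simp
    ring
  -- derivative of the radius
  have hrc : HasFDerivAt (fun y : Fin 3 → ℝ => Real.sqrt (y 0 * y 0 + y 1 * y 1))
      ((proj 0 : (Fin 3 → ℝ) →L[ℝ] ℝ)) ![rm, 0, zm] := by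
    have hne : (![rm, 0, zm] : Fin 3 → ℝ) 0 * (![rm, 0, zm] : Fin 3 → ℝ) 0
        + (![rm, 0, zm] : Fin 3 → ℝ) 1 * (![rm, 0, zm] : Fin 3 → ℝ) 1 ≠ 0 := by
      rw [hsum]; positivity
    have h := (Real.hasDerivAt_sqrt hne).comp_hasFDerivAt ![rm, 0, zm] hq
    refine h.congr_fderiv (Eq.symm ?_)
    refine ContinuousLinearMap.ext fun v => ?_
    show v 0 = _
    simp [hsq]
    field_simp
    rw [Real.sqrt_sq hr.le]
  -- derivative of the inverse radius
  have hinv : HasFDerivAt (fun y : Fin 3 → ℝ => (Real.sqrt (y 0 * y 0 + y 1 * y 1))⁻¹)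
      ((-(rm ^ 2)⁻¹) • (proj 0 : (Fin 3 → ℝ) →L[ℝ] ℝ)) ![rm, 0, zm] := by
    have hne : Real.sqrt ((![rm, 0, zm] : Fin 3 → ℝ) 0 * (![rm, 0, zm] : Fin 3 → ℝ) 0
        + (![rm, 0, zm] : Fin 3 → ℝ) 1 * (![rm, 0, zm] : Fin 3 → ℝ) 1) ≠ 0 := by
      rw [hsq]; exact hrne
    have h := (hasDerivAt_inv hne).comp_hasFDerivAt ![rm, 0, zm] hrc
    refine h.congr_fderiv (Eq.symm ?_)
    refine ContinuousLinearMap.ext fun v => ?_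
    show -(rm ^ 2)⁻¹ * v 0 = _
    simp [hsq]
    left
    rw [show rm * rm = rm ^ 2 by ring, Real.sq_sqrt (by positivity : (0:ℝ) ≤ rm ^ 2)]
  -- derivative of y ↦ H(r(y), y 2)
  set LH := fderiv ℝ H (rm, zm) with hLHdef
  have hφ : HasFDerivAt (fun y : Fin 3 → ℝ => (Real.sqrt (y 0 * y 0 + y 1 * y 1), y 2))
      ((proj 0 : (Fin 3 → ℝ) →L[ℝ] ℝ).prod (proj 2)) ![rm, 0, zm] :=
    hrc.prodMk (hproj 2)
  have hHφ : HasFDerivAt (fun y : Fin 3 → ℝ => H (Real.sqrt (y 0 * y 0 + y 1 * y 1), y 2))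
      (LH.comp ((proj 0 : (Fin 3 → ℝ) →L[ℝ] ℝ).prod (proj 2))) ![rm, 0, zm] := by
    have hH' : HasFDerivAt H LH
        ((fun y : Fin 3 → ℝ => (Real.sqrt (y 0 * y 0 + y 1 * y 1), y 2)) ![rm, 0, zm]) := by
      show HasFDerivAt H LH (Real.sqrt _, _)
      rw [hsq]
      show HasFDerivAt H LH (rm, zm)
      exact hH.hasFDerivAt
    exact hH'.comp ![rm, 0, zm] hφ
  -- LH evaluation
  have hLH : ∀ a b : ℝ, LH (a, b) = a * pdr H (rm, zm) + b * pdz H (rm, zm) := by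
    intro a b
    have hab : ((a, b) : ℝ × ℝ) = a • ((1:ℝ), (0:ℝ)) + b • ((0:ℝ), (1:ℝ)) := by
      simp [Prod.ext_iff]
    rw [hab, map_add, LH.map_smul, LH.map_smul, smul_eq_mul, smul_eq_mul, pdr, pdz, hLHdef]
  -- the three component functions
  have e0 : (fun y : Fin 3 → ℝ => ((H (rcyl y, y 2) / rcyl y) • eθ y) 0)
      = fun y : Fin 3 → ℝ => (H (Real.sqrt (y 0 * y 0 + y 1 * y 1), y 2)
          * (Real.sqrt (y 0 * y 0 + y 1 * y 1))⁻¹)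
          * (-(y 1) * (Real.sqrt (y 0 * y 0 + y 1 * y 1))⁻¹) := by
    funext y
    have : y 0 ^ 2 + y 1 ^ 2 = y 0 * y 0 + y 1 * y 1 := by ring
    simp [eθ, rcyl, div_eq_mul_inv, this]
  have e1 : (fun y : Fin 3 → ℝ => ((H (rcyl y, y 2) / rcyl y) • eθ y) 1)
      = fun y : Fin 3 → ℝ => (H (Real.sqrt (y 0 * y 0 + y 1 * y 1), y 2)
          * (Real.sqrt (y 0 * y 0 + y 1 * y 1))⁻¹)
          * (y 0 * (Real.sqrt (y 0 * y 0 + y 1 * y 1))⁻¹) := by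
    funext y
    have : y 0 ^ 2 + y 1 ^ 2 = y 0 * y 0 + y 1 * y 1 := by ring
    simp [eθ, rcyl, div_eq_mul_inv, this]
  have e2 : (fun y : Fin 3 → ℝ => ((H (rcyl y, y 2) / rcyl y) • eθ y) 2)
      = fun _ : Fin 3 → ℝ => (0:ℝ) := by
    funext y
    simp [eθ]
  -- derivatives of the components
  have hnum := hHφ.fun_mul hinv
  have hf0 := hnum.fun_mul ((hproj 1).fun_neg.fun_mul hinv)
  have hf1 := hnum.fun_mul ((hproj 0).fun_mul hinv)
  funext i
  fin_cases i <;>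
    simp only [curl, pd, e0, e1, e2, Matrix.cons_val_zero, Matrix.cons_val_one, Matrix.head_cons,
      Matrix.cons_val_two, Matrix.tail_cons]
  · rw [fderiv_fun_const, hf1.fderiv]
    simp [hsq, hsq', hsq'', hLH, Pi.single_apply]
    field_simp
  · rw [fderiv_fun_const, hf0.fderiv]
    simp [hsq, hsq', hsq'', hLH, Pi.single_apply]
  · rw [hf1.fderiv, hf0.fderiv]
    simp [hsq, hsq', hsq'', hLH, Pi.single_apply]
    field_simp
    ring

theorem F_curl_dot_eq_N_grad_dot (u : ℝ × ℝ → ℝ × ℝ) (Ht Gt : ℝ × ℝ → ℝ)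
    (rm zm : ℝ) (hr : 0 < rm)
    (hu : DifferentiableAt ℝ u (rm, zm))
    (hH : DifferentiableAt ℝ Ht (rm, zm))
    (hG : DifferentiableAt ℝ Gt (rm, zm)) :
    (Fhat u (rm, zm)).mulVec (curl (fun y => (Ht (rcyl y, y 2) / rcyl y) • eθ y) ![rm, 0, zm])
        ⬝ᵥ (Fhat u (rm, zm)).mulVec
          (curl (fun y => (Gt (rcyl y, y 2) / rcyl y) • eθ y) ![rm, 0, zm]) =
      (1 / rm ^ 2) *
        ((Nhat u (rm, zm)).mulVec (grad2 Ht (rm, zm)) ⬝ᵥ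
          (Nhat u (rm, zm)).mulVec (grad2 Gt (rm, zm))) := by
  rw [curl_azi Ht rm zm hr hH, curl_azi Gt rm zm hr hG]
  have hrne : rm ≠ 0 := ne_of_gt hr
  simp [Fhat, Nhat, grad2, Matrix.mulVec, dotProduct, Fin.sum_univ_three,
    Fin.sum_univ_two]
  field_simp
  ring
end
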